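/- arXiv:1809.06638 — 4 statements merged into one kernel-verified Lean document; each statement's English description precedes it below -/
import Mathlib

section
/- Let Π be a ground normal logic program over a set A of atoms and let L ⊆ A. For every answer set I ∈ AS(Π) there exists an answer set I' ∈ AS(Π_{L̄}) of the omission program such that I' ∩ (A \ L) = I \ L. -/
namespace Stmt0

/-- A ground normal logic rule over atoms `α`: head is an atom or `⊥` (`none`),
with finite positive and negative bodies (finiteness assumed where needed). -/
structure Rule (α : Type*) where
  head : Option α
  pos : Set α
  neg : Set α

/-- `I` satisfies the body of `r`: `B⁺(r) ⊆ I` and `B⁻(r) ∩ I = ∅`. -/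
def satBody {α : Type*} (I : Set α) (r : Rule α) : Prop :=
  r.pos ⊆ I ∧ ∀ a ∈ r.neg, a ∉ I

/-- `I` is a model of the program `Pr`: the head of every rule whose body is
satisfied is a (non-`⊥`) atom belonging to `I`. -/
def isModel {α : Type*} (Pr : Set (Rule α)) (I : Set α) : Prop :=
  ∀ r ∈ Pr, satBody I r → ∃ a, r.head = some a ∧ a ∈ I

/-- FLP-reduct: the rules of `Pr` whose body is satisfied by `I`. -/
def reduct {α : Type*} (Pr : Set (Rule α)) (I : Set α) : Set (Rule α) :=
  {r | r ∈ Pr ∧ satBody I r}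

/-- `I` is an answer set of `Pr`: a ⊆-minimal model of the FLP-reduct `fPr^I`. -/
def isAnswerSet {α : Type*} (Pr : Set (Rule α)) (I : Set α) : Prop :=
  isModel (reduct Pr I) I ∧ ∀ J, J ⊆ I → isModel (reduct Pr I) J → J = I

/-- The body of `r` mentions some atom of `L`. -/
def mentions {α : Type*} (r : Rule α) (L : Set α) : Prop :=
  ∃ a ∈ r.pos ∪ r.neg, a ∈ L

/-- The head of `r` is not an atom of `L` (constraints satisfy this trivially). -/
def headNotIn {α : Type*} (r : Rule α) (L : Set α) : Prop :=
  ∀ a, r.head = some a → a ∉ L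

/-- A rule over `α`, viewed as a rule over the extended atom set
`α ⊕ Rule α` (auxiliary atoms are indexed by rules). -/
def liftRule {α : Type*} (r : Rule α) : Rule (α ⊕ Rule α) :=
  ⟨r.head.map Sum.inl, Sum.inl '' r.pos, Sum.inl '' r.neg⟩

/-- First half of the choice rule `0{h(r)}1 ← B⁺(r) \ L, not (B⁻(r) \ L)`:
`h(r) ← B⁺(r) \ L, not ((B⁻(r) \ L) ∪ {α'_r})`, with fresh atom `α'_r = Sum.inr r`. -/
def choice1 {α : Type*} (r : Rule α) (a : α) (L : Set α) : Rule (α ⊕ Rule α) :=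
  ⟨some (Sum.inl a), Sum.inl '' (r.pos \ L), Sum.inl '' (r.neg \ L) ∪ {Sum.inr r}⟩

/-- Second half of the choice rule:
`α'_r ← B⁺(r) \ L, not ((B⁻(r) \ L) ∪ {h(r)})`. -/
def choice2 {α : Type*} (r : Rule α) (a : α) (L : Set α) : Rule (α ⊕ Rule α) :=
  ⟨some (Sum.inr r), Sum.inl '' (r.pos \ L), Sum.inl '' (r.neg \ L) ∪ {Sum.inl a}⟩

/-- The omission program `Π_{L̄}`: (i) rules with head not in `L` whose body does
not mention `L`, unchanged; (ii) for non-constraint rules with head not in `L`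
whose body mentions `L`, the choice rule `0{h(r)}1 ← B⁺(r) \ L, not (B⁻(r) \ L)`
(as its two-rule abbreviation with a fresh auxiliary atom); rules with head in
`L` and constraints mentioning `L` are dropped. -/
def omission {α : Type*} (Pr : Set (Rule α)) (L : Set α) : Set (Rule (α ⊕ Rule α)) :=
  {r' | ∃ r, r ∈ Pr ∧ headNotIn r L ∧ ¬ mentions r L ∧ r' = liftRule r} ∪
  {r' | ∃ r, r ∈ Pr ∧ ∃ a, r.head = some a ∧ a ∉ L ∧ mentions r L ∧
        (r' = choice1 r a L ∨ r' = choice2 r a L)}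

/-- for every answer set `I` of `Π` there is an answer set `I'` of
the omission program `Π_{L̄}` with `I' ∩ (A \ L) = I \ L` (on original atoms). -/
theorem omission_over_approximation {α : Type*} (Pr : Set (Rule α))
    (hfin : ∀ r ∈ Pr, r.pos.Finite ∧ r.neg.Finite)
    (L : Set α) (I : Set α) (hI : isAnswerSet Pr I) :
    ∃ I' : Set (α ⊕ Rule α), isAnswerSet (omission Pr L) I' ∧
      {a : α | Sum.inl a ∈ I'} \ L = I \ L := by
  classical
  obtain ⟨hImod, hImin⟩ := hI
  -- the set of rules whose auxiliary atom belongs to I'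
  set C : Set (Rule α) := {r | r ∈ Pr ∧ ∃ a, r.head = some a ∧ a ∉ L ∧ mentions r L ∧
      (∀ b ∈ r.pos, b ∉ L → b ∈ I) ∧ (∀ b ∈ r.neg, b ∉ L → b ∉ I) ∧ a ∉ I} with hCdef
  set I' : Set (α ⊕ Rule α) :=
    Sum.elim (fun a => a ∈ I ∧ a ∉ L) (fun r => r ∈ C) with hI'def
  have hmemL : ∀ a : α, Sum.inl a ∈ I' ↔ a ∈ I ∧ a ∉ L := fun a => Iff.rfl
  have hmemR : ∀ r : Rule α, Sum.inr r ∈ I' ↔ r ∈ C := fun r => Iff.rfl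
  refine ⟨I', ⟨?_, ?_⟩, ?_⟩
  · -- I' is a model of the reduct of the omission program
    rintro r' ⟨hmem, hsat⟩ _
    rcases hmem with ⟨r, hrPr, hhead, hnm, rfl⟩ | ⟨r, hrPr, a, hha, haL, hm, hch⟩
    · -- lifted rule
      obtain ⟨hpos, hneg⟩ := hsat
      have hsatI : satBody I r := by
        constructor
        · intro b hb
          exact ((hmemL b).1 (hpos ⟨b, hb, rfl⟩)).1
        · intro b hb hbI
          have hbL : b ∉ L := fun h => hnm ⟨b, Or.inr hb, h⟩
          exact hneg (Sum.inl b) ⟨b, hb, rfl⟩ ((hmemL b).2 ⟨hbI, hbL⟩)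
      obtain ⟨a, hha, haI⟩ := hImod r ⟨hrPr, hsatI⟩ hsatI
      exact ⟨Sum.inl a, by simp [liftRule, hha], (hmemL a).2 ⟨haI, hhead a hha⟩⟩
    · rcases hch with rfl | rfl
      · -- choice1
        obtain ⟨hpos, hneg⟩ := hsat
        have hrC : r ∉ C := (hmemR r).not.1 (hneg (Sum.inr r) (Or.inr rfl))
        have haI : a ∈ I := by
          by_contra haI
          exact hrC ⟨hrPr, a, hha, haL, hm,
            fun b hb hbL => ((hmemL b).1 (hpos ⟨b, ⟨hb, hbL⟩, rfl⟩)).1,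
            fun b hb hbL hbI => hneg (Sum.inl b) (Or.inl ⟨b, ⟨hb, hbL⟩, rfl⟩)
              ((hmemL b).2 ⟨hbI, hbL⟩), haI⟩
        exact ⟨Sum.inl a, rfl, (hmemL a).2 ⟨haI, haL⟩⟩
      · -- choice2
        obtain ⟨hpos, hneg⟩ := hsat
        have haI : a ∉ I := fun haI =>
          hneg (Sum.inl a) (Or.inr rfl) ((hmemL a).2 ⟨haI, haL⟩)
        refine ⟨Sum.inr r, rfl, (hmemR r).2 ⟨hrPr, a, hha, haL, hm,
          fun b hb hbL => ((hmemL b).1 (hpos ⟨b, ⟨hb, hbL⟩, rfl⟩)).1,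
          fun b hb hbL hbI => hneg (Sum.inl b) (Or.inl ⟨b, ⟨hb, hbL⟩, rfl⟩)
            ((hmemL b).2 ⟨hbI, hbL⟩), haI⟩⟩
  · -- minimality
    intro J hJsub hJmod
    set K : Set α := {a | Sum.inl a ∈ J} ∪ (I ∩ L) with hKdef
    have hKsub : K ⊆ I := by
      rintro a (ha | ha)
      · exact ((hmemL a).1 (hJsub ha)).1
      · exact ha.1
    have hKmod : isModel (reduct Pr I) K := by
      rintro r ⟨hrPr, hsatI⟩ hsatK
      obtain ⟨a, hha, haI⟩ := hImod r ⟨hrPr, hsatI⟩ hsatI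
      refine ⟨a, hha, ?_⟩
      by_cases haL : a ∈ L
      · exact Or.inr ⟨haI, haL⟩
      by_cases hm : mentions r L
      · -- use choice1 r a L
        have hc1 : choice1 r a L ∈ omission Pr L :=
          Or.inr ⟨r, hrPr, a, hha, haL, hm, Or.inl rfl⟩
        have hrC : r ∉ C := by
          rintro ⟨-, a', hha', -, -, -, -, ha'I⟩
          rw [hha] at hha'
          exact ha'I (Option.some.inj hha' ▸ haI)
        have hsat1 : satBody I' (choice1 r a L) := by
          constructor
          · rintro x ⟨b, ⟨hb, hbL⟩, rfl⟩
            exact (hmemL b).2 ⟨hsatI.1 hb, hbL⟩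
          · rintro x (⟨b, ⟨hb, hbL⟩, rfl⟩ | hx)
            · exact fun h => hsatI.2 b hb ((hmemL b).1 h).1
            · rcases hx with rfl
              exact (hmemR r).not.2 hrC
        have := hJmod (choice1 r a L) ⟨hc1, hsat1⟩ ?_
        · obtain ⟨x, hx, hxJ⟩ := this
          have : x = Sum.inl a := Option.some.inj hx.symm
          subst this
          exact Or.inl hxJ
        · constructor
          · rintro x ⟨b, ⟨hb, hbL⟩, rfl⟩
            rcases hsatK.1 hb with h | h
            · exact h
            · exact absurd h.2 hbL
          · intro x hx hxJ
            exact hsat1.2 x hx (hJsub hxJ)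
      · -- use the lifted rule
        have hl : liftRule r ∈ omission Pr L := by
          refine Or.inl ⟨r, hrPr, ?_, hm, rfl⟩
          intro a' hha'
          rw [hha] at hha'
          exact Option.some.inj hha' ▸ haL
        have hsatl : satBody I' (liftRule r) := by
          constructor
          · rintro x ⟨b, hb, rfl⟩
            exact (hmemL b).2 ⟨hsatI.1 hb, fun h => hm ⟨b, Or.inl hb, h⟩⟩
          · rintro x ⟨b, hb, rfl⟩ h
            exact hsatI.2 b hb ((hmemL b).1 h).1
        have := hJmod (liftRule r) ⟨hl, hsatl⟩ ?_
        · obtain ⟨x, hx, hxJ⟩ := this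
          have hx' : x = Sum.inl a := by
            simp [liftRule, hha] at hx
            exact hx.symm
          subst hx'
          exact Or.inl hxJ
        · constructor
          · rintro x ⟨b, hb, rfl⟩
            rcases hsatK.1 hb with h | h
            · exact h
            · exact absurd h.2 (fun hh => hm ⟨b, Or.inl hb, hh⟩)
          · intro x hx hxJ
            exact hsatl.2 x hx (hJsub hxJ)
    have hKI : K = I := hImin K hKsub hKmod
    have hinlJ : ∀ a, a ∈ I → a ∉ L → Sum.inl a ∈ J := by
      intro a haI haL
      have : a ∈ K := hKI ▸ haI
      rcases this with h | h
      · exact h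
      · exact absurd h.2 haL
    apply Set.Subset.antisymm hJsub
    rintro (a | r) hx
    · obtain ⟨haI, haL⟩ := (hmemL a).1 hx
      exact hinlJ a haI haL
    · obtain ⟨hrPr, a, hha, haL, hm, hposC, hnegC, haI⟩ := (hmemR r).1 hx
      have hc2 : choice2 r a L ∈ omission Pr L :=
        Or.inr ⟨r, hrPr, a, hha, haL, hm, Or.inr rfl⟩
      have hsat2 : satBody I' (choice2 r a L) := by
        constructor
        · rintro x ⟨b, ⟨hb, hbL⟩, rfl⟩
          exact (hmemL b).2 ⟨hposC b hb hbL, hbL⟩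
        · rintro x (⟨b, ⟨hb, hbL⟩, rfl⟩ | hx')
          · exact fun h => hnegC b hb hbL ((hmemL b).1 h).1
          · rcases hx' with rfl
            exact fun h => haI ((hmemL a).1 h).1
      have := hJmod (choice2 r a L) ⟨hc2, hsat2⟩ ?_
      · obtain ⟨x, hx', hxJ⟩ := this
        have : x = Sum.inr r := Option.some.inj hx'.symm
        subst this
        exact hxJ
      · constructor
        · rintro x ⟨b, ⟨hb, hbL⟩, rfl⟩
          exact hinlJ b (hposC b hb hbL) hbL
        · intro x hx' hxJ
          exact hsat2.2 x hx' (hJsub hxJ)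
  · -- projection condition
    ext a
    simp only [Set.mem_diff, Set.mem_setOf_eq, hmemL]
    tauto

end Stmt0
end

section
/- Let Π be a ground normal logic program over a set A of atoms, let L ⊆ A, and let I ∈ AS(Π). Define J = (I \ L) ∪ { α'_r : r is a rule of Π falling under case (ii) of the omission construction such that B⁺(r) \ L ⊆ I \ L, (B⁻(r) \ L) ∩ (I \ L) = ∅, and h(r) ∉ I }. Then J is a model of the omission program Π_{L̄}. -/
namespace Stmt1

/-- A ground normal logic rule over atoms `α`: head is an atom or `⊥` (`none`),
with finite positive and negative bodies (finiteness assumed where needed). -/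
structure Rule (α : Type*) where
  head : Option α
  pos : Set α
  neg : Set α

/-- `I` satisfies the body of `r`: `B⁺(r) ⊆ I` and `B⁻(r) ∩ I = ∅`. -/
def satBody {α : Type*} (I : Set α) (r : Rule α) : Prop :=
  r.pos ⊆ I ∧ ∀ a ∈ r.neg, a ∉ I

/-- `I` is a model of the program `Pr`: the head of every rule whose body is
satisfied is a (non-`⊥`) atom belonging to `I`. -/
def isModel {α : Type*} (Pr : Set (Rule α)) (I : Set α) : Prop :=
  ∀ r ∈ Pr, satBody I r → ∃ a, r.head = some a ∧ a ∈ I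

/-- FLP-reduct: the rules of `Pr` whose body is satisfied by `I`. -/
def reduct {α : Type*} (Pr : Set (Rule α)) (I : Set α) : Set (Rule α) :=
  {r | r ∈ Pr ∧ satBody I r}

/-- `I` is an answer set of `Pr`: a ⊆-minimal model of the FLP-reduct `fPr^I`. -/
def isAnswerSet {α : Type*} (Pr : Set (Rule α)) (I : Set α) : Prop :=
  isModel (reduct Pr I) I ∧ ∀ J, J ⊆ I → isModel (reduct Pr I) J → J = I

/-- The body of `r` mentions some atom of `L`. -/
def mentions {α : Type*} (r : Rule α) (L : Set α) : Prop :=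
  ∃ a ∈ r.pos ∪ r.neg, a ∈ L

/-- The head of `r` is not an atom of `L` (constraints satisfy this trivially). -/
def headNotIn {α : Type*} (r : Rule α) (L : Set α) : Prop :=
  ∀ a, r.head = some a → a ∉ L

/-- A rule over `α`, viewed as a rule over the extended atom set
`α ⊕ Rule α` (auxiliary atoms are indexed by rules). -/
def liftRule {α : Type*} (r : Rule α) : Rule (α ⊕ Rule α) :=
  ⟨r.head.map Sum.inl, Sum.inl '' r.pos, Sum.inl '' r.neg⟩

/-- First half of the choice rule `0{h(r)}1 ← B⁺(r) \ L, not (B⁻(r) \ L)`: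
`h(r) ← B⁺(r) \ L, not ((B⁻(r) \ L) ∪ {α'_r})`, with fresh atom `α'_r = Sum.inr r`. -/
def choice1 {α : Type*} (r : Rule α) (a : α) (L : Set α) : Rule (α ⊕ Rule α) :=
  ⟨some (Sum.inl a), Sum.inl '' (r.pos \ L), Sum.inl '' (r.neg \ L) ∪ {Sum.inr r}⟩

/-- Second half of the choice rule:
`α'_r ← B⁺(r) \ L, not ((B⁻(r) \ L) ∪ {h(r)})`. -/
def choice2 {α : Type*} (r : Rule α) (a : α) (L : Set α) : Rule (α ⊕ Rule α) :=
  ⟨some (Sum.inr r), Sum.inl '' (r.pos \ L), Sum.inl '' (r.neg \ L) ∪ {Sum.inl a}⟩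

/-- The omission program `Π_{L̄}`: (i) rules with head not in `L` whose body does
not mention `L`, unchanged; (ii) for non-constraint rules with head not in `L`
whose body mentions `L`, the choice rule `0{h(r)}1 ← B⁺(r) \ L, not (B⁻(r) \ L)`
(as its two-rule abbreviation with a fresh auxiliary atom); rules with head in
`L` and constraints mentioning `L` are dropped. -/
def omission {α : Type*} (Pr : Set (Rule α)) (L : Set α) : Set (Rule (α ⊕ Rule α)) :=
  {r' | ∃ r, r ∈ Pr ∧ headNotIn r L ∧ ¬ mentions r L ∧ r' = liftRule r} ∪
  {r' | ∃ r, r ∈ Pr ∧ ∃ a, r.head = some a ∧ a ∉ L ∧ mentions r L ∧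
        (r' = choice1 r a L ∨ r' = choice2 r a L)}

/-- for an answer set `I` of `Π`, the interpretation
`J = (I \ L) ∪ { α'_r | r falls under case (ii), B⁺(r) \ L ⊆ I \ L,
(B⁻(r) \ L) ∩ (I \ L) = ∅, and h(r) ∉ I }` is a model of the omission
program `Π_{L̄}`. -/
theorem shifted_interpretation_is_model {α : Type*} (Pr : Set (Rule α))
    (hfin : ∀ r ∈ Pr, r.pos.Finite ∧ r.neg.Finite)
    (L : Set α) (I : Set α) (hI : isAnswerSet Pr I) :
    isModel (omission Pr L)
      (Sum.inl '' (I \ L) ∪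
        Sum.inr '' {r | r ∈ Pr ∧ (∃ a, r.head = some a ∧ a ∉ L) ∧ mentions r L ∧
          r.pos \ L ⊆ I \ L ∧ (r.neg \ L) ∩ (I \ L) = ∅ ∧
          ∀ a, r.head = some a → a ∉ I}) := by
  obtain ⟨hImodel, -⟩ := hI
  set S : Set (Rule α) := {r | r ∈ Pr ∧ (∃ a, r.head = some a ∧ a ∉ L) ∧ mentions r L ∧
          r.pos \ L ⊆ I \ L ∧ (r.neg \ L) ∩ (I \ L) = ∅ ∧
          ∀ a, r.head = some a → a ∉ I} with hS
  set J : Set (α ⊕ Rule α) := Sum.inl '' (I \ L) ∪ Sum.inr '' S with hJ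
  have hJl : ∀ b : α, (Sum.inl b : α ⊕ Rule α) ∈ J ↔ b ∈ I \ L := by
    intro b; simp [hJ]
  have hJr : ∀ s : Rule α, (Sum.inr s : α ⊕ Rule α) ∈ J ↔ s ∈ S := by
    intro s; simp [hJ]
  intro r' hr' hsat
  obtain ⟨hpos, hneg⟩ := hsat
  rcases hr' with ⟨r, hrPr, hhead, hment, rfl⟩ | ⟨r, hrPr, a, hha, haL, hment, hc⟩
  · -- case (i)
    have hposI : r.pos ⊆ I := fun b hb => ((hJl b).1 (hpos ⟨b, hb, rfl⟩)).1
    have hnegI : ∀ b ∈ r.neg, b ∉ I := by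
      intro b hb hbI
      have hbL : b ∉ L := fun h => hment ⟨b, Or.inr hb, h⟩
      exact hneg (Sum.inl b) ⟨b, hb, rfl⟩ ((hJl b).2 ⟨hbI, hbL⟩)
    obtain ⟨a, hae, haI⟩ := hImodel r ⟨hrPr, hposI, hnegI⟩ ⟨hposI, hnegI⟩
    refine ⟨Sum.inl a, ?_, ?_⟩
    · simp [liftRule, hae]
    · exact (hJl a).2 ⟨haI, hhead a hae⟩
  · -- case (ii)
    have hposIL : r.pos \ L ⊆ I \ L := by
      intro b hb
      rcases hc with rfl | rfl
      · exact (hJl b).1 (hpos ⟨b, hb, rfl⟩)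
      · exact (hJl b).1 (hpos ⟨b, hb, rfl⟩)
    have hnegIL : (r.neg \ L) ∩ (I \ L) = ∅ := by
      ext b; simp only [Set.mem_inter_iff, Set.mem_empty_iff_false, iff_false, not_and]
      intro hb hbI
      rcases hc with rfl | rfl
      · exact hneg (Sum.inl b) (Or.inl ⟨b, hb, rfl⟩) ((hJl b).2 hbI)
      · exact hneg (Sum.inl b) (Or.inl ⟨b, hb, rfl⟩) ((hJl b).2 hbI)
    rcases hc with rfl | rfl
    · -- choice1: aux atom not in J, so r ∉ S, so a ∈ I
      have hrS : r ∉ S := fun h => hneg (Sum.inr r) (Or.inr rfl) ((hJr r).2 h)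
      have haI : a ∈ I := by
        by_contra haI
        exact hrS ⟨hrPr, ⟨a, hha, haL⟩, hment, hposIL, hnegIL,
          fun a' ha' => by rw [hha] at ha'; cases ha'; exact haI⟩
      exact ⟨Sum.inl a, rfl, (hJl a).2 ⟨haI, haL⟩⟩
    · -- choice2: head inl a not in J, so a ∉ I, so r ∈ S
      have haI : a ∉ I := by
        intro haI
        exact hneg (Sum.inl a) (Or.inr rfl) ((hJl a).2 ⟨haI, haL⟩)
      exact ⟨Sum.inr r, rfl, (hJr r).2 ⟨hrPr, ⟨a, hha, haL⟩, hment, hposIL, hnegIL,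
        fun a' ha' => by rw [hha] at ha'; cases ha'; exact haI⟩⟩

end Stmt1
end

section
/- There exist a finite set A of atoms, a ground normal logic program Π over A, a subset L ⊆ A, and an answer set I ∈ AS(Π) such that for the program Π' obtained exactly as the omission program Π_{L̄} except that every constraint ⊥ ← B⁺, not B⁻ whose body mentions an atom of L is replaced by the shrunk constraint ⊥ ← B⁺ \ L, not (B⁻ \ L) (instead of being omitted), there is no answer set I' ∈ AS(Π') with I' ∩ (A \ L) = I \ L. Hence shrinking constraints destroys the over-approximation property of literal omission. -/
/-!
In `a ←.  ⊥ ← not a` the set `{a}` is an answer set. Omitting `L = {a}` shrinks the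
constraint to `⊥ ←` with empty body, which every interpretation violates, so the
shrunk omission program has no answer set at all.
-/

namespace Stmt2

/-- A ground normal logic rule over atoms `α`: head is an atom or `⊥` (`none`),
with finite positive and negative bodies (finiteness assumed where needed). -/
structure Rule (α : Type*) where
  head : Option α
  pos : Set α
  neg : Set α

/-- `I` satisfies the body of `r`: `B⁺(r) ⊆ I` and `B⁻(r) ∩ I = ∅`. -/
def satBody {α : Type*} (I : Set α) (r : Rule α) : Prop :=
  r.pos ⊆ I ∧ ∀ a ∈ r.neg, a ∉ I

/-- `I` is a model of the program `Pr`: the head of every rule whose body is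
satisfied is a (non-`⊥`) atom belonging to `I`. -/
def isModel {α : Type*} (Pr : Set (Rule α)) (I : Set α) : Prop :=
  ∀ r ∈ Pr, satBody I r → ∃ a, r.head = some a ∧ a ∈ I

/-- FLP-reduct: the rules of `Pr` whose body is satisfied by `I`. -/
def reduct {α : Type*} (Pr : Set (Rule α)) (I : Set α) : Set (Rule α) :=
  {r | r ∈ Pr ∧ satBody I r}

/-- `I` is an answer set of `Pr`: a ⊆-minimal model of the FLP-reduct `fPr^I`. -/
def isAnswerSet {α : Type*} (Pr : Set (Rule α)) (I : Set α) : Prop :=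
  isModel (reduct Pr I) I ∧ ∀ J, J ⊆ I → isModel (reduct Pr I) J → J = I

/-- The body of `r` mentions some atom of `L`. -/
def mentions {α : Type*} (r : Rule α) (L : Set α) : Prop :=
  ∃ a ∈ r.pos ∪ r.neg, a ∈ L

/-- The head of `r` is not an atom of `L` (constraints satisfy this trivially). -/
def headNotIn {α : Type*} (r : Rule α) (L : Set α) : Prop :=
  ∀ a, r.head = some a → a ∉ L

/-- A rule over `α`, viewed as a rule over the extended atom set
`α ⊕ Rule α` (auxiliary atoms are indexed by rules). -/
def liftRule {α : Type*} (r : Rule α) : Rule (α ⊕ Rule α) :=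
  ⟨r.head.map Sum.inl, Sum.inl '' r.pos, Sum.inl '' r.neg⟩

/-- First half of the choice rule `0{h(r)}1 ← B⁺(r) \ L, not (B⁻(r) \ L)`:
`h(r) ← B⁺(r) \ L, not ((B⁻(r) \ L) ∪ {α'_r})`, with fresh atom `α'_r = Sum.inr r`. -/
def choice1 {α : Type*} (r : Rule α) (a : α) (L : Set α) : Rule (α ⊕ Rule α) :=
  ⟨some (Sum.inl a), Sum.inl '' (r.pos \ L), Sum.inl '' (r.neg \ L) ∪ {Sum.inr r}⟩

/-- Second half of the choice rule:
`α'_r ← B⁺(r) \ L, not ((B⁻(r) \ L) ∪ {h(r)})`. -/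
def choice2 {α : Type*} (r : Rule α) (a : α) (L : Set α) : Rule (α ⊕ Rule α) :=
  ⟨some (Sum.inr r), Sum.inl '' (r.pos \ L), Sum.inl '' (r.neg \ L) ∪ {Sum.inl a}⟩

/-- The omission program `Π_{L̄}`: (i) rules with head not in `L` whose body does
not mention `L`, unchanged; (ii) for non-constraint rules with head not in `L`
whose body mentions `L`, the choice rule `0{h(r)}1 ← B⁺(r) \ L, not (B⁻(r) \ L)`
(as its two-rule abbreviation with a fresh auxiliary atom); rules with head in
`L` and constraints mentioning `L` are dropped. -/
def omission {α : Type*} (Pr : Set (Rule α)) (L : Set α) : Set (Rule (α ⊕ Rule α)) :=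
  {r' | ∃ r, r ∈ Pr ∧ headNotIn r L ∧ ¬ mentions r L ∧ r' = liftRule r} ∪
  {r' | ∃ r, r ∈ Pr ∧ ∃ a, r.head = some a ∧ a ∉ L ∧ mentions r L ∧
        (r' = choice1 r a L ∨ r' = choice2 r a L)}

/-- The shrunk constraint `⊥ ← B⁺(r) \ L, not (B⁻(r) \ L)` obtained from a
constraint `r` whose body mentions `L`. -/
def shrunkConstraint {α : Type*} (r : Rule α) (L : Set α) : Rule (α ⊕ Rule α) :=
  ⟨none, Sum.inl '' (r.pos \ L), Sum.inl '' (r.neg \ L)⟩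

/-- The variant `Π'` of the omission program in which every constraint whose
body mentions an atom of `L` is replaced by its shrunk version instead of
being omitted. -/
def omissionShrunk {α : Type*} (Pr : Set (Rule α)) (L : Set α) :
    Set (Rule (α ⊕ Rule α)) :=
  omission Pr L ∪
  {r' | ∃ r, r ∈ Pr ∧ r.head = none ∧ mentions r L ∧ r' = shrunkConstraint r L}

section Counterexample

variable {α : Type*}

theorem not_isAnswerSet_of_emptyConstraint_mem {Pr : Set (Rule α)}
    (h : (⟨none, ∅, ∅⟩ : Rule α) ∈ Pr) (I : Set α) : ¬ isAnswerSet Pr I := by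
  rintro ⟨hmod, -⟩
  have hbody : satBody I ⟨none, ∅, ∅⟩ := ⟨Set.empty_subset I, fun _ h => h.elim⟩
  obtain ⟨_, hhead, -⟩ := hmod _ ⟨h, hbody⟩ hbody
  cases hhead

theorem shrunkConstraint_eq_empty_of_subset {r : Rule α} {L : Set α}
    (hpos : r.pos ⊆ L) (hneg : r.neg ⊆ L) : shrunkConstraint r L = ⟨none, ∅, ∅⟩ := by
  simp [shrunkConstraint, Set.sdiff_eq_empty.2 hpos, Set.sdiff_eq_empty.2 hneg]

theorem shrunkConstraint_mem_omissionShrunk {Pr : Set (Rule α)} {L : Set α} {r : Rule α}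
    (hr : r ∈ Pr) (hhead : r.head = none) (hL : mentions r L) :
    shrunkConstraint r L ∈ omissionShrunk Pr L :=
  Or.inr ⟨r, hr, hhead, hL, rfl⟩

theorem not_isAnswerSet_omissionShrunk {Pr : Set (Rule α)} {L : Set α} {r : Rule α}
    (hr : r ∈ Pr) (hhead : r.head = none) (hL : mentions r L)
    (hpos : r.pos ⊆ L) (hneg : r.neg ⊆ L) (I' : Set (α ⊕ Rule α)) :
    ¬ isAnswerSet (omissionShrunk Pr L) I' := by
  apply not_isAnswerSet_of_emptyConstraint_mem _ I'
  rw [← shrunkConstraint_eq_empty_of_subset hpos hneg]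
  exact shrunkConstraint_mem_omissionShrunk hr hhead hL

/-- The program `a ←.  ⊥ ← not a`. -/
def factWithConstraint (a : α) : Set (Rule α) :=
  {⟨some a, ∅, ∅⟩, ⟨none, ∅, {a}⟩}

theorem isAnswerSet_factWithConstraint (a : α) :
    isAnswerSet (factWithConstraint a) {a} := by
  have hfact (J : Set α) : satBody J (⟨some a, ∅, ∅⟩ : Rule α) :=
    ⟨Set.empty_subset J, fun _ h => h.elim⟩
  refine ⟨?_, fun J hJ hmod => ?_⟩
  · rintro r ⟨rfl | rfl, hbody⟩ -
    · exact ⟨a, rfl, rfl⟩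
    · exact absurd rfl (hbody.2 a rfl)
  · obtain ⟨b, hb, hbJ⟩ := hmod _ ⟨Or.inl rfl, hfact {a}⟩ (hfact J)
    cases hb
    exact Set.Subset.antisymm hJ (Set.singleton_subset_iff.2 hbJ)

end Counterexample

/-- there are a finite set of atoms, a ground normal program `Π`
over them, a subset `L`, and an answer set `I` of `Π` such that no answer set
`I'` of the shrunk-constraint variant `Π'` satisfies `I' ∩ (A \ L) = I \ L`:
shrinking constraints destroys the over-approximation property. -/
theorem shrunk_constraints_not_over_approximation :
    ∃ (n : ℕ) (Pr : Set (Rule (Fin n))) (L I : Set (Fin n)),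
      (∀ r ∈ Pr, r.pos.Finite ∧ r.neg.Finite) ∧
      isAnswerSet Pr I ∧
      ¬ ∃ I' : Set (Fin n ⊕ Rule (Fin n)),
          isAnswerSet (omissionShrunk Pr L) I' ∧
          {a : Fin n | Sum.inl a ∈ I'} \ L = I \ L := by
  refine ⟨1, factWithConstraint 0, {0}, {0}, ?_, isAnswerSet_factWithConstraint 0, ?_⟩
  · rintro r (rfl | rfl) <;> simp
  · rintro ⟨I', hI', -⟩
    have hconstraint : (⟨none, ∅, {0}⟩ : Rule (Fin 1)) ∈ factWithConstraint 0 :=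
      Set.mem_insert_of_mem _ rfl
    exact not_isAnswerSet_omissionShrunk (L := {0}) hconstraint rfl ⟨0, Or.inr rfl, rfl⟩
      (Set.empty_subset _) subset_rfl I' hI'

end Stmt2
end

section
/- Let A = (S, S₀, Act, Φ) be a system, Σ a set of action sequences with transition function Φ_Σ, P a policy, h_st : S → Ŝ and h_act : Σ → Â abstraction functions with generated abstract transition function Φ̂_P and abstract initial states Ŝ₀, and let μ be a goal predicate on S and μ̂ a goal predicate on Ŝ such that the abstraction distinguishes the goal condition, i.e., μ(s) ↔ μ̂(h_st(s)) for every s ∈ S. If for a given n every abstract trajectory ŝ₀, â₁, …, ŝ_n of length n contains some state ŝ_i satisfying μ̂, then every concrete policy trajectory s₀, σ₁, …, s_n of length n contains some state s_i satisfying μ; equivalently, the absence of an abstract counterexample of length n implies the absence of a concrete counterexample of length n. -/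
namespace Stmt9

/-- States reached from `s` by executing the action sequence `σ` under the
transition function `Φ` (the induced `Φ_Σ(s, σ)`). -/
def reach {S Act : Type*} (Φ : S → Act → Set S) : S → List Act → Set S
  | s, [] => {s}
  | s, a :: σ => ⋃ s' ∈ Φ s a, reach Φ s' σ

/-- `σ` is executable from `s`. -/
def executable {S Act : Type*} (Φ : S → Act → Set S) (s : S) (σ : List Act) : Prop :=
  (reach Φ s σ).Nonempty

/-- `Pol` is a policy for the plan set `Sig`: `Pol s ⊆ Σ(s)`, the plans of
`Sig` executable from `s`. -/
def isPolicy {S Act : Type*} (Φ : S → Act → Set S) (Sig : Set (List Act))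
    (Pol : S → Set (List Act)) : Prop :=
  ∀ s, Pol s ⊆ {σ ∈ Sig | executable Φ s σ}

/-- The generated abstract transition function
`Φ̂_P(ŝ, â) = { h_st(s') | ∃ s'' with h_st(s'') = ŝ, ∃ σ ∈ P(s'') with
h_act(σ) = â, s' ∈ Φ_Σ(s'', σ) }`. -/
def PhiHat {S Act Sh Ah : Type*} (Φ : S → Act → Set S)
    (Pol : S → Set (List Act)) (hst : S → Sh) (hact : List Act → Ah)
    (sh : Sh) (ah : Ah) : Set Sh :=
  {x | ∃ s'', hst s'' = sh ∧ ∃ σ ∈ Pol s'', hact σ = ah ∧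
        ∃ s' ∈ reach Φ s'' σ, x = hst s'}

/-- if the abstraction distinguishes the goal
(`μ(s) ↔ μ̂(h_st(s))`) and every abstract trajectory of length `n` contains a
state satisfying `μ̂`, then every concrete policy trajectory of length `n`
contains a state satisfying `μ`: absence of an abstract counterexample of
length `n` implies absence of a concrete one. -/
theorem no_abstract_cex_implies_no_concrete_cex {S Act Sh Ah : Type*}
    (S0 : Set S) (Φ : S → Act → Set S) (Sig : Set (List Act))
    (Pol : S → Set (List Act)) (hPol : isPolicy Φ Sig Pol)
    (hst : S → Sh) (hact : List Act → Ah)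
    (μ : S → Prop) (μh : Sh → Prop) (hgoal : ∀ s, μ s ↔ μh (hst s))
    (n : ℕ)
    (habs : ∀ (sh : ℕ → Sh) (ah : ℕ → Ah),
      sh 0 ∈ hst '' S0 →
      (∀ i < n, sh (i + 1) ∈ PhiHat Φ Pol hst hact (sh i) (ah i)) →
      ∃ i ≤ n, μh (sh i)) :
    ∀ (s : ℕ → S) (σ : ℕ → List Act),
      s 0 ∈ S0 →
      (∀ i < n, σ i ∈ Pol (s i) ∧ s (i + 1) ∈ reach Φ (s i) (σ i)) →
      ∃ i ≤ n, μ (s i) := by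
  intro s σ hs0 hstep
  have := habs (fun i => hst (s i)) (fun i => hact (σ i)) ⟨s 0, hs0, rfl⟩ ?_
  · obtain ⟨i, hi, hμ⟩ := this
    exact ⟨i, hi, (hgoal (s i)).2 hμ⟩
  · intro i hi
    obtain ⟨hσ, hr⟩ := hstep i hi
    exact ⟨s i, rfl, σ i, hσ, rfl, s (i+1), hr, rfl⟩

end Stmt9
end
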